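/- Let ψ, φ ∈ δ_N with ψ ⊀ φ, and define χ_sup = ψ ∨ φ. Then χ_sup minimizes the lattice distance to φ over all χ ∈ δ_N with ψ ≺ χ: for every χ ∈ δ_N with ψ ≺ χ, d(φ, χ) ≥ d(φ, χ_sup), where d(p,q) = H(p) + H(q) − 2H(p ∨ q). -/

import Mathlib

open Finset

/-- Partial sum of the first `l` components of `p`. -/
def PartSum {N : ℕ} (p : Fin N → ℝ) (l : ℕ) : ℝ := ∑ i : Fin N, if (i : ℕ) < l then p i else 0

/-- `p` is a probability vector sorted in decreasing order (an element of δ_N). -/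
def IsDecProb {N : ℕ} (p : Fin N → ℝ) : Prop :=
  (∀ i, 0 ≤ p i) ∧ (∀ i j : Fin N, i ≤ j → p j ≤ p i) ∧ ∑ i, p i = 1

/-- `p ≺ q` : every partial sum of `p` is at most the corresponding partial sum of `q`. -/
def Maj {N : ℕ} (p q : Fin N → ℝ) : Prop := ∀ l : ℕ, PartSum p l ≤ PartSum q l

/-- `s` is the supremum of `p` and `q` in the majorization lattice. -/
def IsSup {N : ℕ} (s p q : Fin N → ℝ) : Prop :=
  IsDecProb s ∧ Maj p s ∧ Maj q s ∧ ∀ t, IsDecProb t → Maj p t → Maj q t → Maj s t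

/-- `s` is the infimum of `p` and `q` in the majorization lattice. -/
def IsInf {N : ℕ} (s p q : Fin N → ℝ) : Prop :=
  IsDecProb s ∧ Maj s p ∧ Maj s q ∧ ∀ t, IsDecProb t → Maj t p → Maj t q → Maj t s

/-- Shannon entropy. -/
noncomputable def H {N : ℕ} (p : Fin N → ℝ) : ℝ := -∑ i, p i * Real.log (p i)

/-!
From ψ ≺ χ ≺ χ ∨ φ and φ ≺ χ ∨ φ we get χ_sup ≺ χ ∨ φ, while χ_sup ∨ φ = χ_sup because
φ ≺ χ_sup. Entropy is Schur-concave, so H(χ ∨ φ) is at most both H(χ) and H(χ_sup), hence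
d(φ, χ) ≥ H(φ) - H(χ_sup) = d(φ, χ_sup).

Schur concavity of H: the tangent-line bound for -x log x gives
H(q) - H(p) ≤ ∑ cᵢ (qᵢ - pᵢ) with cᵢ = -(log pᵢ + 1), which increases along the support of the
sorted vector p; Abel summation against the nonnegative partial-sum differences of q and p
shows that this sum is ≤ 0.
-/

open Real

lemma negMulLog_sub_le {x y : ℝ} (hx : 0 < x) (hy : 0 ≤ y) :
    negMulLog y - negMulLog x ≤ -(log x + 1) * (y - x) := by
  rcases hy.eq_or_lt with rfl | hy
  · simp [negMulLog]
    linarith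
  · have h := mul_le_mul_of_nonneg_left (log_le_sub_one_of_pos (div_pos hx hy)) hy.le
    have hxy : y * (x / y - 1) = x - y := by field_simp
    rw [log_div hx.ne' hy.ne', hxy] at h
    simp only [negMulLog]
    linarith

lemma sum_range_mul_sub_le {c D : ℕ → ℝ} (hD0 : D 0 = 0) {n : ℕ}
    (h : ∀ l < n, c l * D (l + 1) ≤ c (l + 1) * D (l + 1)) :
    ∑ l ∈ range n, c l * (D (l + 1) - D l) ≤ c n * D n := by
  induction n with
  | zero => simp [hD0]
  | succ n ih =>
    rw [sum_range_succ]
    linarith [ih fun l hl => h l (by omega), h n (by omega)]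

variable {N : ℕ}

def zeroExtend (p : Fin N → ℝ) (i : ℕ) : ℝ := if h : i < N then p ⟨i, h⟩ else 0

@[simp]
lemma zeroExtend_val (p : Fin N → ℝ) (i : Fin N) : zeroExtend p i = p i := by
  simp [zeroExtend]

lemma zeroExtend_of_le (p : Fin N → ℝ) {i : ℕ} (hi : N ≤ i) : zeroExtend p i = 0 := by
  simp [zeroExtend, not_lt.2 hi]

lemma IsDecProb.antitone_zeroExtend {p : Fin N → ℝ} (hp : IsDecProb p) :
    Antitone (zeroExtend p) := by
  intro i j hij
  unfold zeroExtend
  split_ifs with hj hi hi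
  · exact hp.2.1 _ _ (Fin.mk_le_mk.2 hij)
  · omega
  · exact hp.1 _
  · rfl

lemma zeroExtend_nonneg {p : Fin N → ℝ} (hp : ∀ i, 0 ≤ p i) (i : ℕ) : 0 ≤ zeroExtend p i := by
  unfold zeroExtend
  split_ifs
  exacts [hp _, le_rfl]

lemma partSum_eq_sum_range (p : Fin N → ℝ) (l : ℕ) :
    PartSum p l = ∑ i ∈ range l, zeroExtend p i := by
  calc PartSum p l = ∑ i ∈ range N, if i < l then zeroExtend p i else 0 := by
        rw [← Fin.sum_univ_eq_sum_range (fun i => if i < l then zeroExtend p i else 0)]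
        simp [PartSum]
    _ = ∑ i ∈ (range N).filter (· < l), zeroExtend p i := (sum_filter _ _).symm
    _ = ∑ i ∈ range l, zeroExtend p i :=
        sum_subset (fun i => by simp) fun i hil hiN => zeroExtend_of_le p (by simp_all)

lemma H_eq_sum_range (p : Fin N → ℝ) : H p = ∑ i ∈ range N, negMulLog (zeroExtend p i) := by
  rw [← Fin.sum_univ_eq_sum_range (fun i => negMulLog (zeroExtend p i))]
  simp [H, negMulLog, sum_neg_distrib]

lemma partSum_le_one {q : Fin N → ℝ} (hq0 : ∀ i, 0 ≤ q i) (hq1 : ∑ i, q i = 1) (l : ℕ) :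
    PartSum q l ≤ 1 :=
  hq1 ▸ sum_le_sum fun i _ => by split_ifs <;> simp [hq0 i]

lemma partSum_succ (p : Fin N → ℝ) (l : ℕ) : PartSum p (l + 1) = PartSum p l + zeroExtend p l := by
  simp only [partSum_eq_sum_range, sum_range_succ]

lemma IsDecProb.partSum_eq_one {p : Fin N → ℝ} (hp : IsDecProb p) {l : ℕ}
    (hl : zeroExtend p l = 0) : PartSum p l = 1 := by
  rw [← hp.2.2]
  refine sum_congr rfl fun i _ => ?_
  split_ifs with hil
  · rfl
  · have := hp.antitone_zeroExtend (not_lt.1 hil)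
    rw [hl, zeroExtend_val] at this
    exact le_antisymm (hp.1 i) this

section Maj

variable {p q : Fin N → ℝ}

lemma partSum_eq_of_maj (hp : IsDecProb p) (hq0 : ∀ i, 0 ≤ q i) (hq1 : ∑ i, q i = 1)
    (hpq : Maj p q) {l : ℕ} (hl : zeroExtend p l = 0) : PartSum q l = PartSum p l :=
  le_antisymm ((partSum_le_one hq0 hq1 l).trans (hp.partSum_eq_one hl).ge) (hpq l)

lemma zeroExtend_eq_zero_of_maj (hp : IsDecProb p) (hq0 : ∀ i, 0 ≤ q i) (hq1 : ∑ i, q i = 1)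
    (hpq : Maj p q) {l : ℕ} (hl : zeroExtend p l = 0) : zeroExtend q l = 0 := by
  have hl' : zeroExtend p (l + 1) = 0 :=
    le_antisymm (hl ▸ hp.antitone_zeroExtend l.le_succ) (zeroExtend_nonneg hp.1 _)
  have h := partSum_eq_of_maj hp hq0 hq1 hpq hl'
  rw [partSum_succ, partSum_succ, partSum_eq_of_maj hp hq0 hq1 hpq hl, hl] at h
  linarith

lemma H_le_H_of_maj (hp : IsDecProb p) (hq0 : ∀ i, 0 ≤ q i) (hq1 : ∑ i, q i = 1)
    (hpq : Maj p q) : H q ≤ H p := by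
  set c : ℕ → ℝ := fun l => -(log (zeroExtend p l) + 1)
  set D : ℕ → ℝ := fun l => PartSum q l - PartSum p l with hD
  have hD_succ (l : ℕ) : D (l + 1) - D l = zeroExtend q l - zeroExtend p l := by
    simp only [hD, partSum_succ]
    ring
  have htangent (l : ℕ) :
      negMulLog (zeroExtend q l) - negMulLog (zeroExtend p l) ≤ c l * (D (l + 1) - D l) := by
    rw [hD_succ]
    rcases (zeroExtend_nonneg hp.1 l).eq_or_lt with hpl | hpl
    · simp [← hpl, zeroExtend_eq_zero_of_maj hp hq0 hq1 hpq hpl.symm]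
    · exact negMulLog_sub_le hpl (zeroExtend_nonneg hq0 l)
  -- `c` increases along the support of `p`, and `D` vanishes off it.
  have hmono (l : ℕ) : c l * D (l + 1) ≤ c (l + 1) * D (l + 1) := by
    rcases (zeroExtend_nonneg hp.1 (l + 1)).eq_or_lt with hpl | hpl
    · simp [hD, partSum_eq_of_maj hp hq0 hq1 hpq hpl.symm]
    · refine mul_le_mul_of_nonneg_right ?_ (sub_nonneg.2 (hpq _))
      linarith [log_le_log hpl (hp.antitone_zeroExtend l.le_succ)]
  have hD0 : D 0 = 0 := by simp [hD, PartSum]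
  have hDN : D N = 0 := by
    simp [hD, partSum_eq_of_maj hp hq0 hq1 hpq (zeroExtend_of_le p le_rfl)]
  suffices H q - H p ≤ 0 by linarith
  calc H q - H p = ∑ l ∈ range N, (negMulLog (zeroExtend q l) - negMulLog (zeroExtend p l)) := by
        rw [H_eq_sum_range, H_eq_sum_range, sum_sub_distrib]
    _ ≤ ∑ l ∈ range N, c l * (D (l + 1) - D l) := sum_le_sum fun l _ => htangent l
    _ ≤ c N * D N := sum_range_mul_sub_le hD0 fun l _ => hmono l
    _ = 0 := by rw [hDN, mul_zero]

lemma maj_antisymm (hpq : Maj p q) (hqp : Maj q p) : p = q := by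
  funext i
  have h := le_antisymm (hpq (i + 1)) (hqp (i + 1))
  rw [partSum_succ, partSum_succ, le_antisymm (hpq i) (hqp i), add_right_inj,
    zeroExtend_val, zeroExtend_val] at h
  exact h

end Maj

lemma IsSup.eq_of_maj {s p q : Fin N → ℝ} (hs : IsSup s p q) (hpq : Maj p q) (hq : IsDecProb q) :
    s = q :=
  maj_antisymm (hs.2.2.2 q hq hpq fun _ => le_rfl) hs.2.2.1

theorem chiSup_minimizes_dist_general {N : ℕ} (ψ φ χsup : Fin N → ℝ)
    (hsup : IsSup χsup ψ φ) :
    ∀ χ sφχ sφχsup : Fin N → ℝ, IsDecProb χ → Maj ψ χ →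
      IsSup sφχ φ χ → IsSup sφχsup φ χsup →
      H φ + H χ - 2 * H sφχ ≥ H φ + H χsup - 2 * H sφχsup := by
  intro χ sφχ sφχsup hχ hψχ hsφχ hsφχsup
  obtain ⟨hsupDec, -, hφsup, hsupLeast⟩ := hsup
  have hsup_maj : Maj χsup sφχ :=
    hsupLeast sφχ hsφχ.1 (fun l => (hψχ l).trans (hsφχ.2.2.1 l)) hsφχ.2.1
  have hH_sup : H sφχ ≤ H χsup := H_le_H_of_maj hsupDec hsφχ.1.1 hsφχ.1.2.2 hsup_maj
  have hH_χ : H sφχ ≤ H χ := H_le_H_of_maj hχ hsφχ.1.1 hsφχ.1.2.2 hsφχ.2.2.1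
  rw [hsφχsup.eq_of_maj hφsup hsupDec]
  linarith

/-- χ_sup = ψ ∨ φ minimizes the lattice distance d(φ,·) over all χ ∈ δ_N with ψ ≺ χ. -/
theorem chiSup_minimizes_dist {N : ℕ} (ψ φ χsup : Fin N → ℝ)
    (hψ : IsDecProb ψ) (hφ : IsDecProb φ) (hnmaj : ¬ Maj ψ φ)
    (hsup : IsSup χsup ψ φ) :
    ∀ χ sφχ sφχsup : Fin N → ℝ, IsDecProb χ → Maj ψ χ →
      IsSup sφχ φ χ → IsSup sφχsup φ χsup →
      H φ + H χ - 2 * H sφχ ≥ H φ + H χsup - 2 * H sφχsup :=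
  chiSup_minimizes_dist_general ψ φ χsup hsup
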